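/- arXiv:cs/0507022 — 5 statements merged into one kernel-verified Lean document; each statement's English description precedes it below -/
import Mathlib

section
/- Let P be a stationary distribution over a finite alphabet V with block entropy H(n), and suppose the limit lim_{n→∞} H(n)/n exists. Let C be a code that is weakly minimax universal for P. Then the expected excess code length satisfies E^C(n) ≥ E(n) for infinitely many n, where E(n) = 2H(n) − H(2n) and E^C(n) = 2H^C(n) − H^C(2n). -/
/-!
Write `D n = H^C(n) - H(n)`, so that `E^C(n) - E(n) = 2 D(n) - D(2n)` and universality says
`D ≥ 0` and `D(n)/n → 0`. If `D(2n) > 2 D(n)` held for all large `n`, the normalized excess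
`D(n)/n` would strictly increase along a doubling sequence `2^k M`, starting from a value
`≥ 0`, and hence could not tend to `0`.
-/

/-- A stationary distribution over the finite alphabet `V`: an assignment of
probabilities to all finite nonempty strings over `V`, consistent under
left and right extension. -/
structure StationaryDist (V : Type*) [Fintype V] where
  P : List V → ℝ
  nonneg : ∀ v : List V, v ≠ [] → 0 ≤ P v
  le_one : ∀ v : List V, v ≠ [] → P v ≤ 1
  sum_single : ∑ a : V, P [a] = 1
  sum_cons : ∀ v : List V, v ≠ [] → ∑ a : V, P (a :: v) = P v
  sum_snoc : ∀ v : List V, v ≠ [] → ∑ a : V, P (v ++ [a]) = P v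

/-- Block entropy `H(n)` of a stationary distribution: the entropy (in bits)
of the strings of length `n`, with `H(0) = 0`.  (Note `Real.logb 2 0 = 0`,
which realizes the convention `0 · log₂ 0 = 0`.) -/
noncomputable def blockH {V : Type*} [Fintype V] (P : StationaryDist V) (n : ℕ) : ℝ :=
  if n = 0 then 0
  else -∑ v : Fin n → V, P.P (List.ofFn v) * Real.logb 2 (P.P (List.ofFn v))

/-- Expected length `H^C(n)` of the code `C` on the strings of length `n`. -/
noncomputable def codeH {V : Type*} [Fintype V] (P : StationaryDist V)
    (C : List V → List Bool) (n : ℕ) : ℝ :=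
  if n = 0 then 0
  else ∑ v : Fin n → V, P.P (List.ofFn v) * ((C (List.ofFn v)).length : ℝ)

open Filter Topology

theorem frequently_apply_two_mul_le_of_tendsto_zero {g : ℕ → ℝ}
    (hg : Tendsto g atTop (𝓝 0)) (hg_nonneg : ∀ᶠ n in atTop, 0 ≤ g n) :
    ∃ᶠ n in atTop, g (2 * n) ≤ g n := by
  by_contra hcon
  rw [not_frequently] at hcon
  obtain ⟨M, hM⟩ := eventually_atTop.1
    ((eventually_ge_atTop 1).and (hg_nonneg.and hcon))
  obtain ⟨hM_pos, hM_nonneg, -⟩ := hM M le_rfl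
  have hgrow : ∀ n, M ≤ n → g n < g (2 * n) := fun n hn => not_le.1 (hM n hn).2.2
  have hmono : Monotone fun k : ℕ => g (2 ^ k * M) := by
    refine monotone_nat_of_le_succ fun k => ?_
    rw [pow_succ', mul_assoc]
    exact (hgrow _ (Nat.le_mul_of_pos_left M (by positivity))).le
  have hdoubling : Tendsto (fun k : ℕ => 2 ^ k * M) atTop atTop :=
    StrictMono.tendsto_atTop fun a b hab =>
      Nat.mul_lt_mul_of_pos_right (Nat.pow_lt_pow_right one_lt_two hab) hM_pos
  have h2M_nonpos : g (2 * M) ≤ 0 := by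
    simpa using hmono.ge_of_tendsto (hg.comp hdoubling) 1
  linarith [hgrow M le_rfl]

theorem frequently_apply_two_mul_le_two_mul_of_div_tendsto_zero {D : ℕ → ℝ}
    (hD : Tendsto (fun n : ℕ => D n / n) atTop (𝓝 0)) (hD_nonneg : ∀ᶠ n in atTop, 0 ≤ D n) :
    ∃ᶠ n in atTop, 1 ≤ n ∧ D (2 * n) ≤ 2 * D n := by
  have hfreq := frequently_apply_two_mul_le_of_tendsto_zero hD
    (hD_nonneg.mono fun n hn => div_nonneg hn n.cast_nonneg)
  refine (hfreq.and_eventually (eventually_ge_atTop 1)).mono fun n ⟨hle, hn⟩ => ⟨hn, ?_⟩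
  have hn_pos : (0 : ℝ) < n := by exact_mod_cast hn
  rw [Nat.cast_mul, Nat.cast_two, ← div_div, div_le_div_iff_of_pos_right hn_pos] at hle
  linarith

theorem excess_code_length_ge_excess_entropy_infinitely_often_general
    {V : Type*} [Fintype V] (P : StationaryDist V)
    (C : List V → List Bool)
    (h : ℝ)
    (hlimH : Filter.Tendsto (fun n : ℕ => blockH P n / n) Filter.atTop (nhds h))
    (huniv_ge : ∀ n : ℕ, 1 ≤ n → blockH P n ≤ codeH P C n)
    (huniv_lim : Filter.Tendsto (fun n : ℕ => codeH P C n / n) Filter.atTop (nhds h)) :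
    {n : ℕ | 1 ≤ n ∧
      2 * blockH P n - blockH P (2 * n)
        ≤ 2 * codeH P C n - codeH P C (2 * n)}.Infinite := by
  set D : ℕ → ℝ := fun n => codeH P C n - blockH P n
  have hD : Tendsto (fun n : ℕ => D n / n) atTop (𝓝 0) := by
    simpa [D, sub_div] using huniv_lim.sub hlimH
  have hD_nonneg : ∀ᶠ n in atTop, 0 ≤ D n :=
    (eventually_ge_atTop 1).mono fun n hn => sub_nonneg.2 (huniv_ge n hn)
  refine Nat.frequently_atTop_iff_infinite.1 <|
    (frequently_apply_two_mul_le_two_mul_of_div_tendsto_zero hD hD_nonneg).mono ?_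
  rintro n ⟨hn, hle⟩
  exact ⟨hn, by linarith⟩

/-- Let `P` be a stationary distribution with block entropy `H(n)` such that
`lim H(n)/n` exists (`= h`), and let `C` be a weakly minimax universal code
for `P`, i.e. `H^C(n) ≥ H(n)` for all `n ≥ 1` and `lim H^C(n)/n = h`.
Then `E^C(n) ≥ E(n)` for infinitely many `n`, where
`E(n) = 2H(n) − H(2n)` and `E^C(n) = 2H^C(n) − H^C(2n)`. -/
theorem excess_code_length_ge_excess_entropy_infinitely_often
    {V : Type*} [Fintype V] (P : StationaryDist V)
    (C : List V → List Bool) (hC : ∀ v : List V, v ≠ [] → C v ≠ [])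
    (h : ℝ)
    (hlimH : Filter.Tendsto (fun n : ℕ => blockH P n / n) Filter.atTop (nhds h))
    (huniv_ge : ∀ n : ℕ, 1 ≤ n → blockH P n ≤ codeH P C n)
    (huniv_lim : Filter.Tendsto (fun n : ℕ => codeH P C n / n) Filter.atTop (nhds h)) :
    {n : ℕ | 1 ≤ n ∧
      2 * blockH P n - blockH P (2 * n)
        ≤ 2 * codeH P C n - codeH P C (2 * n)}.Infinite :=
  excess_code_length_ge_excess_entropy_infinitely_often_general P C h hlimH huniv_ge huniv_lim
end

section
/- For all nonempty strings v and u over the alphabet V, the lengths of the shortest admissible grammars satisfy L^m(v) ≤ L^m(vu) + L^{>1}(vu) and L^m(u) ≤ L^m(vu) + L^{>1}(vu), where vu denotes the concatenation of v and u. -/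
/-- Expansion of a string of terminals (`Sum.inl`) and nonterminals (`Sum.inr j`,
a reference to the `j`-th production in `prods`), with recursion depth bounded
by `fuel`. -/
def expandStr {V : Type*} (prods : List (List (V ⊕ ℕ))) : ℕ → List (V ⊕ ℕ) → List V
  | 0, _ => []
  | fuel + 1, g =>
      (g.map fun s =>
        match s with
        | Sum.inl a => [a]
        | Sum.inr j => expandStr prods fuel (prods.getD j [])).flatten

/-- An admissible grammar over the terminal alphabet `V`: a nonempty list of
productions `g_0, g_1, …, g_k` (the production of nonterminal `b_i` being
`prods[i]`), each production a nonempty string of terminals and nonterminals,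
where the production of `b_i` may refer only to nonterminals `b_j` with
`i < j ≤ k`.  The dependence among nonterminals is thus acyclic, so every
nonterminal expands, by recursively substituting productions, into a unique
finite string of terminals. -/
structure AdmissibleGrammar (V : Type*) where
  prods : List (List (V ⊕ ℕ))
  prods_ne : prods ≠ []
  prod_ne : ∀ g ∈ prods, g ≠ []
  refs : ∀ i, i < prods.length → ∀ j, Sum.inr j ∈ prods.getD i [] →
    i < j ∧ j < prods.length

namespace AdmissibleGrammar

/-- The string of terminals into which the initial nonterminal `b_0` expands.
(Since references go strictly upwards, recursion depth `prods.length`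
suffices to expand everything.) -/
def expansion {V : Type*} (G : AdmissibleGrammar V) : List V :=
  expandStr G.prods G.prods.length (G.prods.getD 0 [])

/-- `G` is an admissible grammar for the string `v`. -/
def IsFor {V : Type*} (G : AdmissibleGrammar V) (v : List V) : Prop :=
  G.expansion = v

/-- The length of the grammar: the total number of terminal and nonterminal
symbol tokens in all its productions. -/
def len {V : Type*} (G : AdmissibleGrammar V) : ℕ :=
  (G.prods.map List.length).sum

/-- The total length of the non-initial productions of `G`
(the length of the vocabulary of `G`). -/
def vocabLen {V : Type*} (G : AdmissibleGrammar V) : ℕ :=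
  ((G.prods.drop 1).map List.length).sum

end AdmissibleGrammar

/-- `Lm v`: the minimal length of an admissible grammar for `v`. -/
noncomputable def Lm {V : Type*} (v : List V) : ℕ :=
  sInf {n | ∃ G : AdmissibleGrammar V, G.IsFor v ∧ G.len = n}

/-- `LgtOne v`: the maximal length of a string occurring at two or more
distinct (possibly overlapping) positions in `v`; `0` if there is none. -/
noncomputable def LgtOne {V : Type*} (v : List V) : ℕ :=
  sSup {n | ∃ w : List V, w.length = n ∧
    ∃ i j : ℕ, i ≠ j ∧ w <+: v.drop i ∧ w <+: v.drop j}

/-!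
Cut a grammar for `vu` at the boundary between `v` and `u`, walking down from the start production
along the nonterminals whose expansions straddle the cut. If such a nonterminal `b_t` also occurs
elsewhere in the derivation tree, its expansion occurs at two distinct positions of `vu`, so it has
length at most `L^{>1}(vu)`; replacing `b_t` and everything after it in the start production by the
terminals of the required prefix of its expansion adds fewer than `L^{>1}(vu)` symbols. Otherwise
`b_t` occurs only once, inlining it into the start production does not lengthen the grammar, and
the walk continues one level deeper. If the walk reaches a boundary between symbols, truncating the
start production there already gives a grammar for `v`. The bound for `u` follows by reversing all
productions.
-/

namespace AdmissibleGrammar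

variable {V : Type*} (G : AdmissibleGrammar V)

def prod (i : ℕ) : List (V ⊕ ℕ) := G.prods.getD i []

def expand (i : ℕ) : List V := expandStr G.prods G.prods.length (G.prod i)

def expandSym : V ⊕ ℕ → List V
  | Sum.inl a => [a]
  | Sum.inr j => G.expand j

def expandWord (T : List (V ⊕ ℕ)) : List V := T.flatMap G.expandSym

@[simp] lemma expandWord_nil : G.expandWord [] = [] := rfl

@[simp] lemma expandWord_cons (s : V ⊕ ℕ) (T : List (V ⊕ ℕ)) :
    G.expandWord (s :: T) = G.expandSym s ++ G.expandWord T := List.flatMap_cons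

@[simp] lemma expandWord_append (T T' : List (V ⊕ ℕ)) :
    G.expandWord (T ++ T') = G.expandWord T ++ G.expandWord T' := List.flatMap_append

@[simp] lemma expandWord_map_inl (w : List V) : G.expandWord (w.map Sum.inl) = w := by
  induction w <;> simp_all [expandSym]

lemma prods_length_pos : 0 < G.prods.length := List.length_pos_iff.2 G.prods_ne

lemma prod_eq_nil {i : ℕ} (hi : G.prods.length ≤ i) : G.prod i = [] :=
  List.getD_eq_default _ _ hi

lemma lt_of_mem_prod {i j : ℕ} (h : Sum.inr j ∈ G.prod i) : i < j ∧ j < G.prods.length := by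
  by_cases hi : i < G.prods.length
  · exact G.refs i hi j h
  · simp [G.prod_eq_nil (not_lt.1 hi)] at h

theorem prod_induction {P : ℕ → Prop} (h : ∀ i, (∀ j, Sum.inr j ∈ G.prod i → P j) → P i)
    (i : ℕ) : P i :=
  h i fun j hj =>
    have := G.lt_of_mem_prod hj
    prod_induction h j
termination_by G.prods.length - i

/-- `G.prods.length - j` bounds the depth of the derivation tree of `b_j`, so fuel `k + 1` already
expands `g` completely. -/
lemma expandStr_succ_succ (k : ℕ) : ∀ g : List (V ⊕ ℕ),
    (∀ j, Sum.inr j ∈ g → G.prods.length ≤ j + k) →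
    expandStr G.prods (k + 1) g = expandStr G.prods (k + 2) g := by
  induction k with
  | zero =>
    intro g hg
    refine congrArg List.flatten (List.map_congr_left fun s hs => ?_)
    rcases s with a | j
    · rfl
    · show expandStr G.prods 0 (G.prod j) = expandStr G.prods 1 (G.prod j)
      rw [G.prod_eq_nil (by simpa using hg j hs)]
      rfl
  | succ k ih =>
    intro g hg
    refine congrArg List.flatten (List.map_congr_left fun s hs => ?_)
    rcases s with a | j
    · rfl
    · exact ih _ fun l hl => by have := (G.lt_of_mem_prod hl).1; have := hg j hs; omega

lemma expandStr_eq_of_le {k k' : ℕ} (hk : k ≤ k') {g : List (V ⊕ ℕ)}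
    (hg : ∀ j, Sum.inr j ∈ g → G.prods.length ≤ j + k) :
    expandStr G.prods (k + 1) g = expandStr G.prods (k' + 1) g := by
  induction k', hk using Nat.le_induction with
  | base => rfl
  | succ k' hk' ih =>
    exact ih.trans (G.expandStr_succ_succ k' g fun j hj => (hg j hj).trans (by omega))

lemma expandStr_eq_expandWord {k : ℕ} {g : List (V ⊕ ℕ)}
    (hg : ∀ j, Sum.inr j ∈ g → G.prods.length ≤ j + k) :
    expandStr G.prods (k + 1) g = G.expandWord g := by
  rcases le_total k G.prods.length with h | h
  · exact G.expandStr_eq_of_le h hg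
  · exact (G.expandStr_eq_of_le h fun j _ => by omega).symm

lemma expand_eq (i : ℕ) : G.expand i = G.expandWord (G.prod i) := by
  obtain ⟨k, hk⟩ := Nat.exists_eq_succ_of_ne_zero G.prods_length_pos.ne'
  rw [expand, hk]
  exact G.expandStr_eq_expandWord fun j hj => by have := (G.lt_of_mem_prod hj).1; omega

def Derives : ℕ → ℕ → Prop := Relation.ReflTransGen fun i j => Sum.inr j ∈ G.prod i

lemma Derives.le {G : AdmissibleGrammar V} {i j : ℕ} (h : G.Derives i j) : i ≤ j := by
  induction h with
  | refl => rfl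
  | tail _ hjk ih => exact ih.trans (G.lt_of_mem_prod hjk).1.le

lemma expand_infix_of_derives {i j : ℕ} (h : G.Derives i j) : G.expand j <:+: G.expand i := by
  induction h with
  | refl => exact List.infix_refl _
  | @tail k l _ hkl ih =>
    refine List.IsInfix.trans ?_ ih
    rw [G.expand_eq k]
    exact List.infix_of_mem_flatten (List.mem_map_of_mem (f := G.expandSym) hkl)

lemma expand_infix_expandWord_of_derives {T : List (V ⊕ ℕ)} {i j : ℕ} (hi : Sum.inr i ∈ T)
    (h : G.Derives i j) : G.expand j <:+: G.expandWord T :=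
  (G.expand_infix_of_derives h).trans (List.infix_of_mem_flatten (List.mem_map_of_mem hi))

lemma expand_congr {G' : AdmissibleGrammar V} {i : ℕ}
    (h : ∀ j, G.Derives i j → G'.prod j = G.prod j) : G'.expand i = G.expand i := by
  induction i using G.prod_induction with
  | h i ih =>
    rw [G'.expand_eq, G.expand_eq, h i Relation.ReflTransGen.refl]
    refine congrArg List.flatten (List.map_congr_left fun s hs => ?_)
    rcases s with a | j
    · rfl
    · exact ih j hs fun l hl => h l (Relation.ReflTransGen.head hs hl)

def set (i : ℕ) (g : List (V ⊕ ℕ)) (hg : g ≠ [])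
    (hrefs : ∀ j, Sum.inr j ∈ g → i < j ∧ j < G.prods.length) : AdmissibleGrammar V where
  prods := G.prods.set i g
  prods_ne := by simpa using G.prods_ne
  prod_ne g' hg' := (List.mem_or_eq_of_mem_set hg').elim (G.prod_ne g') fun h => h ▸ hg
  refs i' hi' j hj := by
    rw [List.length_set] at hi' ⊢
    by_cases hii : i' = i
    · subst hii
      exact hrefs j (by simpa [List.getD_eq_getElem?_getD, hi'] using hj)
    · exact G.refs i' hi' j (by simpa [List.getD_eq_getElem?_getD, Ne.symm hii] using hj)

section set

variable {i : ℕ} {g : List (V ⊕ ℕ)} {hg : g ≠ []}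
  {hrefs : ∀ j, Sum.inr j ∈ g → i < j ∧ j < G.prods.length}

@[simp] lemma length_set : (G.set i g hg hrefs).prods.length = G.prods.length :=
  List.length_set

lemma prod_set_self (hi : i < G.prods.length) : (G.set i g hg hrefs).prod i = g := by
  simp [set, prod, List.getD_eq_getElem?_getD, hi]

lemma prod_set_of_ne {j : ℕ} (hj : j ≠ i) : (G.set i g hg hrefs).prod j = G.prod j := by
  simp [set, prod, List.getD_eq_getElem?_getD, Ne.symm hj]

lemma len_set (hi : i < G.prods.length) :
    (G.set i g hg hrefs).len + (G.prod i).length = G.len + g.length := by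
  have hsplit := List.sum_take_add_sum_drop (G.prods.map List.length) i
  rw [List.drop_eq_getElem_cons (by simpa using hi), List.sum_cons] at hsplit
  simp only [len, set, List.map_set, List.sum_set, List.length_map, if_pos hi]
  simp only [prod, List.getD_eq_getElem _ _ hi, List.getElem_map] at hsplit ⊢
  omega

lemma expandWord_set {T : List (V ⊕ ℕ)} (hT : ∀ j, Sum.inr j ∈ T → ¬ G.Derives j i) :
    (G.set i g hg hrefs).expandWord T = G.expandWord T := by
  refine congrArg List.flatten (List.map_congr_left fun s hs => ?_)
  rcases s with a | j
  · rfl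
  · exact G.expand_congr fun l hl => G.prod_set_of_ne fun hli => hT j hs (hli ▸ hl)

end set

lemma exists_isFor_expandWord {T : List (V ⊕ ℕ)} (hT : T ≠ [])
    (hrefs : ∀ j, Sum.inr j ∈ T → 0 < j ∧ j < G.prods.length) :
    ∃ G' : AdmissibleGrammar V, G'.IsFor (G.expandWord T) ∧
      G'.len + (G.prod 0).length = G.len + T.length := by
  refine ⟨G.set 0 T hT hrefs, ?_, G.len_set G.prods_length_pos⟩
  change (G.set 0 T hT hrefs).expand 0 = _
  rw [expand_eq, prod_set_self _ G.prods_length_pos]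
  exact G.expandWord_set fun j hj hj0 => by have := hj0.le; have := (hrefs j hj).1; omega

/-- The production of `b_t` cannot be deleted without renumbering the nonterminals; shrinking it
to a single terminal instead makes inlining `b_t` keep the grammar length. -/
lemma exists_inline {A B : List (V ⊕ ℕ)} {t : ℕ} (h0 : G.prod 0 = A ++ Sum.inr t :: B) (a : V)
    (hAB : ∀ j, Sum.inr j ∈ A ++ B → ¬ G.Derives j t) :
    ∃ G₁ : AdmissibleGrammar V, G₁.prods.length = G.prods.length ∧
      G₁.prod 0 = A ++ G.prod t ++ B ∧ G₁.len = G.len ∧ G₁.expand 0 = G.expand 0 ∧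
      G₁.expandWord A = G.expandWord A ∧ G₁.expandWord (G.prod t) = G.expand t := by
  have ht := G.lt_of_mem_prod (i := 0) (j := t) (by rw [h0]; simp)
  have htne : G.prod t ≠ [] :=
    G.prod_ne _ (by rw [prod, List.getD_eq_getElem _ _ ht.2]; exact List.getElem_mem _)
  have hgood : ∀ j, Sum.inr j ∈ A ++ G.prod t ++ B →
      (0 < j ∧ j < G.prods.length) ∧ ¬ G.Derives j t := by
    intro j hj
    by_cases hjt : Sum.inr j ∈ G.prod t
    · have := G.lt_of_mem_prod hjt
      exact ⟨by omega, fun h => by have := h.le; omega⟩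
    · have hAB' : Sum.inr j ∈ A ++ B := by simp at hj ⊢; tauto
      exact ⟨G.lt_of_mem_prod (by rw [h0]; simp at hAB' ⊢; tauto), hAB j hAB'⟩
  let G₂ := G.set t [Sum.inl a] (by simp) (by simp)
  have hL₂ : 0 < G₂.prods.length := by simpa [G₂] using G.prods_length_pos
  let G₁ := G₂.set 0 (A ++ G.prod t ++ B) (by simp [htne]) fun j hj => by
    simpa [G₂] using (hgood j hj).1
  have hsame : ∀ T, T ⊆ A ++ G.prod t ++ B → G₁.expandWord T = G.expandWord T := fun T hT =>
    (G₂.expandWord_set fun j hj h => by have := h.le; have := (hgood j (hT hj)).1.1; omega).trans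
      (G.expandWord_set fun j hj => (hgood j (hT hj)).2)
  refine ⟨G₁, by simp [G₁, G₂], G₂.prod_set_self hL₂, ?_, ?_,
    hsame A fun _ hx => by simp [hx],
    (hsame _ fun _ hx => by simp [hx]).trans (G.expand_eq t).symm⟩
  · have hlen₂ : G₂.len + (G.prod t).length = G.len + 1 := G.len_set ht.2
    have hlen₁ : G₁.len + (G₂.prod 0).length = G₂.len + (A ++ G.prod t ++ B).length :=
      G₂.len_set hL₂
    rw [G.prod_set_of_ne (by omega), h0] at hlen₁
    simp only [List.length_append, List.length_cons] at hlen₁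
    omega
  · rw [expand_eq, G₂.prod_set_self hL₂, hsame _ (List.Subset.refl _), G.expand_eq 0, h0]
    simp [expandSym, G.expand_eq t]

end AdmissibleGrammar

section LgtOne

variable {V : Type*}

lemma bddAbove_lgtOne_set (w : List V) :
    BddAbove {n | ∃ x : List V, x.length = n ∧
      ∃ i j : ℕ, i ≠ j ∧ x <+: w.drop i ∧ x <+: w.drop j} := by
  refine ⟨w.length, ?_⟩
  rintro n ⟨x, rfl, i, -, -, hi, -⟩
  have := hi.length_le
  simp only [List.length_drop] at this
  omega

lemma le_lgtOne_of_eq_append {w x P Q P' Q' : List V} (h : w = P ++ x ++ Q)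
    (h' : w = P' ++ x ++ Q') (hP : P.length ≠ P'.length) : x.length ≤ LgtOne w :=
  le_csSup (bddAbove_lgtOne_set w)
    ⟨x, rfl, P.length, P'.length, hP, by simp [h], by simp [h']⟩

lemma length_le_lgtOne_of_infix {x P Q : List V} (hx : x ≠ [])
    (h : x <:+: P ∨ x <:+: Q) : x.length ≤ LgtOne (P ++ x ++ Q) := by
  have hx := List.length_pos_iff.2 hx
  rcases h with ⟨P₁, P₂, rfl⟩ | ⟨Q₁, Q₂, rfl⟩
  · exact le_lgtOne_of_eq_append (P := P₁) (Q := P₂ ++ x ++ Q) (by simp) rfl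
      (by simp only [List.length_append]; omega)
  · exact le_lgtOne_of_eq_append (P := P ++ x ++ Q₁) (Q := Q₂) (by simp) rfl
      (by simp only [List.length_append]; omega)

lemma exists_eq_take_append_of_prefix_drop {w x : List V} {i : ℕ} (hx : x ≠ [])
    (h : x <+: w.drop i) : ∃ Q, w = w.take i ++ x ++ Q ∧ (w.take i).length = i := by
  obtain ⟨Q, hQ⟩ := h
  have : i < w.length := by
    by_contra hi
    simp [List.drop_eq_nil_of_le (not_lt.1 hi), hx] at hQ
  exact ⟨Q, by rw [List.append_assoc, hQ, List.take_append_drop], by simp; omega⟩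

lemma lgtOne_le_lgtOne_reverse (w : List V) : LgtOne w ≤ LgtOne w.reverse := by
  refine csSup_le ⟨0, [], rfl, 0, 1, one_ne_zero.symm, List.nil_prefix, List.nil_prefix⟩ ?_
  rintro n ⟨x, rfl, i, j, hij, hi, hj⟩
  rcases eq_or_ne x [] with rfl | hx
  · exact Nat.zero_le _
  obtain ⟨Q, hQ, hi⟩ := exists_eq_take_append_of_prefix_drop hx hi
  obtain ⟨Q', hQ', hj⟩ := exists_eq_take_append_of_prefix_drop hx hj
  have hlen := congrArg List.length hQ
  have hlen' := congrArg List.length hQ'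
  simp only [List.length_append] at hlen hlen'
  rw [← List.length_reverse]
  exact le_lgtOne_of_eq_append (P := Q.reverse) (Q := (w.take i).reverse) (P' := Q'.reverse)
    (Q' := (w.take j).reverse)
    (by nth_rw 1 [hQ]; simp) (by nth_rw 1 [hQ']; simp)
    (by simp only [List.length_reverse]; omega)

lemma lgtOne_reverse (w : List V) : LgtOne w.reverse = LgtOne w :=
  le_antisymm (by simpa using lgtOne_le_lgtOne_reverse w.reverse) (lgtOne_le_lgtOne_reverse w)

end LgtOne

lemma List.exists_eq_append_cons_of_le_length_flatMap {α β : Type*} (f : α → List β) :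
    ∀ (l : List α) {m : ℕ}, 0 < m → m ≤ (l.flatMap f).length →
      ∃ l₁ a l₂, l = l₁ ++ a :: l₂ ∧ (l₁.flatMap f).length < m ∧
        m ≤ (l₁.flatMap f).length + (f a).length
  | [], m, hm, h => by simp at h; omega
  | a :: l, m, hm, h => by
    by_cases ha : m ≤ (f a).length
    · exact ⟨[], a, l, rfl, by simpa, by simpa⟩
    · obtain ⟨l₁, b, l₂, rfl, h₁, h₂⟩ :=
        exists_eq_append_cons_of_le_length_flatMap f l (m := m - (f a).length) (by omega)
          (by simp only [List.flatMap_cons, List.length_append] at h; omega)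
      exact ⟨a :: l₁, b, l₂, rfl, by simp only [List.flatMap_cons, List.length_append]; omega,
        by simp only [List.flatMap_cons, List.length_append]; omega⟩

namespace AdmissibleGrammar

variable {V : Type*} (G : AdmissibleGrammar V)

lemma exists_isFor_expandWord_of_prod_zero_eq {A B : List (V ⊕ ℕ)} (h0 : G.prod 0 = A ++ B)
    (hA : A ≠ []) :
    ∃ G' : AdmissibleGrammar V, G'.IsFor (G.expandWord A) ∧ G'.len + B.length = G.len := by
  obtain ⟨G', hG', hlen⟩ := G.exists_isFor_expandWord hA fun j hj =>
    G.lt_of_mem_prod (by rw [h0]; exact List.mem_append_left _ hj)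
  exact ⟨G', hG', by rw [h0, List.length_append] at hlen; omega⟩

lemma exists_isFor_expandWord_append_take_of_derives {A B : List (V ⊕ ℕ)} {t r : ℕ}
    (h0 : G.prod 0 = A ++ Sum.inr t :: B) (hrep : ∃ j, Sum.inr j ∈ A ++ B ∧ G.Derives j t)
    (hr : 0 < r) (hrt : r < (G.expand t).length) :
    ∃ G' : AdmissibleGrammar V, G'.IsFor (G.expandWord A ++ (G.expand t).take r) ∧
      G'.len ≤ G.len + LgtOne (G.expand 0) := by
  have hpre : (G.expand t).take r ≠ [] := List.length_pos_iff.1 (by simp; omega)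
  obtain ⟨G', hG', hlen⟩ := G.exists_isFor_expandWord (T := A ++ ((G.expand t).take r).map Sum.inl)
    (List.append_ne_nil_of_right_ne_nil _ (mt List.map_eq_nil_iff.1 hpre)) fun j hj =>
      G.lt_of_mem_prod (by rw [h0]; simp [-List.map_take] at hj ⊢; tauto)
  refine ⟨G', by simpa [-List.map_take] using hG', ?_⟩
  have hLgtOne : (G.expand t).length ≤ LgtOne (G.expand 0) := by
    obtain ⟨j, hj, hjt⟩ := hrep
    rw [G.expand_eq 0, h0, expandWord_append, expandWord_cons, ← List.append_assoc]
    refine length_le_lgtOne_of_infix (List.ne_nil_of_length_pos (by omega)) ?_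
    rcases List.mem_append.1 hj with hj | hj
    · exact Or.inl (G.expand_infix_expandWord_of_derives hj hjt)
    · exact Or.inr (G.expand_infix_expandWord_of_derives hj hjt)
  rw [h0] at hlen
  simp [-List.map_take] at hlen
  omega

/-- The parameter `k` bounds the depth `G.prods.length - j` of the nonterminals `b_j` of `M`;
each inlining moves the cut one level deeper. -/
theorem exists_isFor_expandWord_append_take {A M B : List (V ⊕ ℕ)} {k m : ℕ}
    (h0 : G.prod 0 = A ++ M ++ B) (hk : ∀ j, Sum.inr j ∈ M → G.prods.length ≤ j + k)
    (hm : 0 < m) (hmM : m ≤ (G.expandWord M).length) :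
    ∃ G' : AdmissibleGrammar V, G'.IsFor (G.expandWord A ++ (G.expandWord M).take m) ∧
      G'.len ≤ G.len + LgtOne (G.expand 0) := by
  induction k using Nat.strong_induction_on generalizing G A M B m with
  | _ k ih =>
  obtain ⟨M₁, s, M₂, rfl, hlt, hle⟩ :=
    List.exists_eq_append_cons_of_le_length_flatMap G.expandSym M hm hmM
  change (G.expandWord M₁).length < m at hlt
  change m ≤ (G.expandWord M₁).length + _ at hle
  have h0' : G.prod 0 = A ++ M₁ ++ s :: (M₂ ++ B) := by rw [h0]; simp
  set r := m - (G.expandWord M₁).length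
  have htake :
      (G.expandWord (M₁ ++ s :: M₂)).take m = G.expandWord M₁ ++ (G.expandSym s).take r := by
    have : r - (G.expandSym s).length = 0 := by omega
    simp [List.take_append, List.take_of_length_le hlt.le, r, this]
  rw [htake, ← List.append_assoc, ← expandWord_append]
  by_cases hb : r = (G.expandSym s).length
  · obtain ⟨G', hG', hlen⟩ :=
      G.exists_isFor_expandWord_of_prod_zero_eq (A := A ++ M₁ ++ [s]) (by simpa using h0') (by simp)
    exact ⟨G', by simpa [hb] using hG', by omega⟩
  obtain ⟨t, rfl⟩ : ∃ t, s = Sum.inr t := by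
    rcases s with a | t
    · simp only [expandSym, List.length_singleton] at hle hb; omega
    · exact ⟨t, rfl⟩
  change r ≠ (G.expand t).length at hb
  change m ≤ _ + (G.expand t).length at hle
  by_cases hrep : ∃ j, Sum.inr j ∈ A ++ M₁ ++ (M₂ ++ B) ∧ G.Derives j t
  · exact G.exists_isFor_expandWord_append_take_of_derives h0' hrep (by omega) (by omega)
  push Not at hrep
  obtain ⟨a, -⟩ := List.exists_mem_of_ne_nil (G.expand t) (List.ne_nil_of_length_pos (by omega))
  obtain ⟨G₁, hL, h₁0, hlen, hG₁, hA, ht⟩ := G.exists_inline h0' a hrep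
  have htL := G.lt_of_mem_prod (i := 0) (j := t) (by rw [h0']; simp)
  have := hk t (by simp)
  have hr : 0 < r := by omega
  have := ih (G.prods.length - t - 1) (by omega) G₁ h₁0
    (fun j hj => by have := (G.lt_of_mem_prod hj).1; omega) hr (by rw [ht]; omega)
  rwa [hA, ht, hlen, hG₁] at this

def ofList (w : List V) (hw : w ≠ []) : AdmissibleGrammar V where
  prods := [w.map Sum.inl]
  prods_ne := by simp
  prod_ne := by simpa using hw
  refs i hi j hj := by
    obtain rfl : i = 0 := by simpa using hi
    simp at hj

lemma ofList_isFor (w : List V) (hw : w ≠ []) : (ofList w hw).IsFor w :=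
  ((ofList w hw).expand_eq 0).trans ((ofList w hw).expandWord_map_inl w)

lemma getD_map_reverse (prods : List (List (V ⊕ ℕ))) (i : ℕ) :
    (prods.map List.reverse).getD i [] = (prods.getD i []).reverse :=
  List.getD_map prods [] List.reverse

lemma expandStr_map_reverse (prods : List (List (V ⊕ ℕ))) (fuel : ℕ) (g : List (V ⊕ ℕ)) :
    expandStr (prods.map List.reverse) fuel g.reverse = (expandStr prods fuel g).reverse := by
  induction fuel generalizing g with
  | zero => rfl
  | succ f ih =>
    simp only [expandStr, List.map_reverse, List.reverse_flatten, List.map_map]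
    congr 2
    refine List.map_congr_left fun s _ => ?_
    rcases s with a | j
    · rfl
    · exact (congrArg _ (getD_map_reverse prods j)).trans (ih _)

def reverse : AdmissibleGrammar V where
  prods := G.prods.map List.reverse
  prods_ne := by simpa using G.prods_ne
  prod_ne g hg := by
    obtain ⟨g', hg', rfl⟩ := List.mem_map.1 hg
    simpa using G.prod_ne g' hg'
  refs i hi j hj := by
    simp only [List.length_map] at hi ⊢
    rw [getD_map_reverse, List.mem_reverse] at hj
    exact G.refs i hi j hj

lemma IsFor.reverse {G : AdmissibleGrammar V} {w : List V} (h : G.IsFor w) :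
    G.reverse.IsFor w.reverse := by
  change expandStr (G.prods.map List.reverse) (G.prods.map List.reverse).length
    ((G.prods.map List.reverse).getD 0 []) = _
  rw [List.length_map, getD_map_reverse, expandStr_map_reverse]
  exact congrArg List.reverse h

lemma len_reverse : G.reverse.len = G.len := by
  simp [len, AdmissibleGrammar.reverse, Function.comp_def]

end AdmissibleGrammar

section Lm

variable {V : Type*}

lemma lm_le_len {w : List V} {G : AdmissibleGrammar V} (h : G.IsFor w) : Lm w ≤ G.len :=
  Nat.sInf_le ⟨G, h, rfl⟩

lemma exists_isFor_len_eq_lm {w : List V} (hw : w ≠ []) :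
    ∃ G : AdmissibleGrammar V, G.IsFor w ∧ G.len = Lm w :=
  Nat.sInf_mem (s := {n | ∃ G : AdmissibleGrammar V, G.IsFor w ∧ G.len = n})
    ⟨_, _, AdmissibleGrammar.ofList_isFor w hw, rfl⟩

lemma lm_reverse (w : List V) : Lm w.reverse = Lm w := by
  refine congrArg sInf (Set.ext fun n => ⟨?_, ?_⟩)
  · rintro ⟨G, hG, rfl⟩
    exact ⟨G.reverse, by simpa using hG.reverse, G.len_reverse⟩
  · rintro ⟨G, hG, rfl⟩
    exact ⟨G.reverse, hG.reverse, G.len_reverse⟩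

lemma lm_le_lm_append_add_lgtOne (v u : List V) (hv : v ≠ []) :
    Lm v ≤ Lm (v ++ u) + LgtOne (v ++ u) := by
  obtain ⟨G, hG, hlen⟩ := exists_isFor_len_eq_lm (w := v ++ u) (by simp [hv])
  have hw : G.expandWord (G.prod 0) = v ++ u := (G.expand_eq 0).symm.trans hG
  obtain ⟨G', hG', hlen'⟩ := G.exists_isFor_expandWord_append_take (A := []) (M := G.prod 0)
    (B := []) (k := G.prods.length) (by simp) (fun _ _ => by omega) (List.length_pos_iff.2 hv)
    (by simp [hw])
  rw [hw, G.expandWord_nil, List.nil_append, List.take_left] at hG'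
  calc Lm v ≤ G'.len := lm_le_len hG'
    _ ≤ Lm (v ++ u) + LgtOne (v ++ u) := by rwa [← hlen, ← hG]

end Lm

theorem shortest_grammar_of_factor_le_general {V : Type*}
    (v u : List V) (hv : v ≠ []) (hu : u ≠ []) :
    Lm v ≤ Lm (v ++ u) + LgtOne (v ++ u) ∧
      Lm u ≤ Lm (v ++ u) + LgtOne (v ++ u) := by
  refine ⟨lm_le_lm_append_add_lgtOne v u hv, ?_⟩
  have h := lm_le_lm_append_add_lgtOne u.reverse v.reverse (by simpa using hu)
  rwa [← List.reverse_append, lm_reverse, lm_reverse, lgtOne_reverse] at h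

/-- For all nonempty strings `v` and `u`, the lengths of the shortest
admissible grammars satisfy `L^m(v) ≤ L^m(vu) + L^{>1}(vu)` and
`L^m(u) ≤ L^m(vu) + L^{>1}(vu)`. -/
theorem shortest_grammar_of_factor_le {V : Type*} [Fintype V]
    (v u : List V) (hv : v ≠ []) (hu : u ≠ []) :
    Lm v ≤ Lm (v ++ u) + LgtOne (v ++ u) ∧
      Lm u ≤ Lm (v ++ u) + LgtOne (v ++ u) :=
  shortest_grammar_of_factor_le_general v u hv hu
end

section
/- For all nonempty strings v and u over the alphabet V, one has 0 ≤ L^m(v) + L^m(u) − L^m(vu), and there exists a shortest admissible grammar G for vu such that L^m(v) + L^m(u) − L^m(vu) ≤ L_0(G) + L^{>1}(vu), where L_0(G) is the total length of the non-initial productions of G and vu denotes the concatenation of v and u. -/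
theorem List.getD_map_map {α β : Type*} (P : List (List α)) (f : α → β) (n : ℕ) :
    (P.map (List.map f)).getD n [] = (P.getD n []).map f := by
  simp only [List.getD_eq_getElem?_getD, List.getElem?_map]
  cases P[n]? <;> rfl

theorem List.inr_mem_map_sumMap {α : Type*} {l : List (α ⊕ ℕ)} {σ : ℕ → ℕ} {j' : ℕ} :
    Sum.inr j' ∈ l.map (Sum.map id σ) ↔ ∃ j, Sum.inr j ∈ l ∧ σ j = j' := by
  simp [Sum.exists]

theorem List.exists_of_flatMap_eq_append {α β : Type*} {f : β → List α} :
    ∀ {l : List β} {v u : List α}, u ≠ [] → l.flatMap f = v ++ u →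
      ∃ la x lb w₁ w₂, l = la ++ x :: lb ∧ f x = w₁ ++ w₂ ∧
        v = la.flatMap f ++ w₁ ∧ u = w₂ ++ lb.flatMap f
  | [], _, _, hu, h => absurd (List.append_eq_nil_iff.1 h.symm).2 hu
  | y :: l, v, u, hu, h => by
    rw [List.flatMap_cons, List.append_eq_append_iff] at h
    rcases h with ⟨v', rfl, h⟩ | ⟨w₂, hy, rfl⟩
    · obtain ⟨la, x, lb, w₁, w₂, rfl, hx, rfl, rfl⟩ := exists_of_flatMap_eq_append hu h
      exact ⟨y :: la, x, lb, w₁, w₂, rfl, hx, by simp, rfl⟩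
    · exact ⟨[], y, l, v, w₂, rfl, hy, by simp, rfl⟩

def reindexErase (t j : ℕ) : ℕ := if j < t then j else j - 1

theorem List.getD_eraseIdx_reindexErase {α : Type*} (P : List (List α)) {t j : ℕ} (hj : j ≠ t) :
    (P.eraseIdx t).getD (reindexErase t j) [] = P.getD j [] := by
  simp only [List.getD_eq_getElem?_getD, List.getElem?_eraseIdx, reindexErase]
  split_ifs <;> first | rfl | omega | (congr 2; omega)

section Expand

variable {V : Type*}

theorem expandStr_nil (P : List (List (V ⊕ ℕ))) (f : ℕ) : expandStr P f [] = [] := by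
  cases f <;> rfl

theorem expandStr_succ_congr (P : List (List (V ⊕ ℕ))) {a b : ℕ} {g : List (V ⊕ ℕ)}
    (h : ∀ j, Sum.inr j ∈ g → expandStr P a (P.getD j []) = expandStr P b (P.getD j [])) :
    expandStr P (a + 1) g = expandStr P (b + 1) g := by
  simp only [expandStr]
  congr 1
  refine List.map_congr_left fun s hs => ?_
  rcases s with c | j
  · rfl
  · exact h j hs

-- A reference `j` starts a chain of at most `P.length - j` nested nonterminals.
theorem expandStr_congr_fuel {P : List (List (V ⊕ ℕ))}
    (hP : ∀ t j, Sum.inr j ∈ P.getD t [] → t < j) :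
    ∀ (d : ℕ) (g : List (V ⊕ ℕ)), (∀ j, Sum.inr j ∈ g → P.length ≤ j + d) → ∀ a b : ℕ,
      expandStr P (d + a + 1) g = expandStr P (d + b + 1) g
  | 0, _, hg, _, _ => expandStr_succ_congr P fun j hj => by
    rw [List.getD_eq_default _ _ (by simpa using hg j hj), expandStr_nil, expandStr_nil]
  | d + 1, _, hg, a, b => expandStr_succ_congr P fun j hj => by
    rw [Nat.add_right_comm d 1 a, Nat.add_right_comm d 1 b]
    exact expandStr_congr_fuel hP d _ (fun j' hj' => by have := hP j j' hj'; grind) a b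

end Expand

namespace AdmissibleGrammar

variable {V : Type*}

theorem lt_of_mem_getD (G : AdmissibleGrammar V) {t j : ℕ}
    (h : Sum.inr j ∈ G.prods.getD t []) : t < j ∧ j < G.prods.length := by
  refine G.refs t ?_ j h
  by_contra ht
  rw [List.getD_eq_default _ _ (not_lt.1 ht)] at h
  cases h

theorem getD_ne_nil (G : AdmissibleGrammar V) {t : ℕ} (ht : t < G.prods.length) :
    G.prods.getD t [] ≠ [] := by
  rw [List.getD_eq_getElem _ _ ht]
  exact G.prod_ne _ (List.getElem_mem ht)

def symExpansion (G : AdmissibleGrammar V) : V ⊕ ℕ → List V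
  | Sum.inl a => [a]
  | Sum.inr j => expandStr G.prods G.prods.length (G.prods.getD j [])

theorem expansion_eq_symExpansion (G : AdmissibleGrammar V) :
    G.expansion = G.symExpansion (.inr 0) := rfl

theorem symExpansion_inl (G : AdmissibleGrammar V) (a : V) :
    G.symExpansion (.inl a) = [a] := rfl

theorem flatMap_symExpansion_map_inl (G : AdmissibleGrammar V) (w : List V) :
    (w.map Sum.inl).flatMap G.symExpansion = w := by
  simp [List.flatMap_map, symExpansion_inl]

theorem symExpansion_inr (G : AdmissibleGrammar V) (t : ℕ) :
    G.symExpansion (.inr t) = (G.prods.getD t []).flatMap G.symExpansion := by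
  obtain ⟨f, hf⟩ : ∃ f, G.prods.length = f + 1 :=
    Nat.exists_eq_succ_of_ne_zero (List.length_pos_iff.2 G.prods_ne).ne'
  show expandStr G.prods G.prods.length _ = _
  rw [hf]
  simp only [expandStr, List.flatMap]
  congr 1
  refine List.map_congr_left fun s hs => ?_
  rcases s with a | j
  · rfl
  · have hj := G.lt_of_mem_getD hs
    obtain ⟨d, rfl⟩ : ∃ d, f = d + 1 := ⟨f - 1, by omega⟩
    show expandStr G.prods (d + 0 + 1) _ = expandStr G.prods G.prods.length _
    rw [hf]
    refine expandStr_congr_fuel (fun t j h => (G.lt_of_mem_getD h).1) d _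
      (fun j' hj' => ?_) 0 1
    have := (G.lt_of_mem_getD hj').1
    omega

theorem symExpansion_inr_ne_nil (G : AdmissibleGrammar V) {t : ℕ} (ht : t < G.prods.length) :
    G.symExpansion (.inr t) ≠ [] := by
  obtain ⟨x, l, hxl⟩ := List.exists_cons_of_ne_nil (G.getD_ne_nil ht)
  rw [symExpansion_inr, hxl, List.flatMap_cons]
  rcases x with a | j
  · simp [symExpansion_inl]
  · have hj := G.lt_of_mem_getD (hxl ▸ List.mem_cons_self : Sum.inr j ∈ G.prods.getD t [])
    exact fun h => G.symExpansion_inr_ne_nil hj.2 (List.append_eq_nil_iff.1 h).1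
termination_by G.prods.length - t
decreasing_by omega

theorem symExpansion_map {G H : AdmissibleGrammar V} {σ : ℕ → ℕ} {S : Set ℕ}
    (hS : ∀ j ∈ S, H.prods.getD (σ j) [] = (G.prods.getD j []).map (Sum.map id σ) ∧
      ∀ j', Sum.inr j' ∈ G.prods.getD j [] → j' ∈ S) {j : ℕ} (hj : j ∈ S) :
    H.symExpansion (.inr (σ j)) = G.symExpansion (.inr j) := by
  rw [symExpansion_inr, symExpansion_inr, (hS j hj).1, List.flatMap_map]
  refine List.flatMap_congr fun x hx => ?_
  rcases x with a | j'
  · rfl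
  · have := G.lt_of_mem_getD hx
    exact symExpansion_map hS ((hS j hj).2 j' hx)
termination_by G.prods.length - j
decreasing_by omega

theorem flatMap_symExpansion_map {G H : AdmissibleGrammar V} {σ : ℕ → ℕ} {g : List (V ⊕ ℕ)}
    (h : ∀ j, Sum.inr j ∈ g → H.symExpansion (.inr (σ j)) = G.symExpansion (.inr j)) :
    (g.map (Sum.map id σ)).flatMap H.symExpansion = g.flatMap G.symExpansion := by
  rw [List.flatMap_map]
  refine List.flatMap_congr fun x hx => ?_
  rcases x with a | j
  · rfl
  · exact h j hx

theorem len_eq (G : AdmissibleGrammar V) :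
    G.len = (G.prods.getD 0 []).length + G.vocabLen := by
  obtain ⟨p, rest, h⟩ := List.exists_cons_of_ne_nil G.prods_ne
  simp [len, vocabLen, h]

def ofWord (w : List V) (hw : w ≠ []) : AdmissibleGrammar V where
  prods := [w.map Sum.inl]
  prods_ne := List.cons_ne_nil _ _
  prod_ne := by simpa using hw
  refs := by simp

theorem ofWord_isFor (w : List V) (hw : w ≠ []) : (ofWord w hw).IsFor w := by
  rw [IsFor, expansion_eq_symExpansion, symExpansion_inr]
  exact flatMap_symExpansion_map_inl _ w

section WithInitial

variable (G : AdmissibleGrammar V) (g : List (V ⊕ ℕ))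

theorem length_cons_tail : (g :: G.prods.tail).length = G.prods.length := by
  have := List.length_pos_iff.2 G.prods_ne
  simp only [List.length_cons, List.length_tail]
  omega

def withInitial (hg : g ≠ []) (hrefs : ∀ j, Sum.inr j ∈ g → 1 ≤ j ∧ j < G.prods.length) :
    AdmissibleGrammar V where
  prods := g :: G.prods.tail
  prods_ne := List.cons_ne_nil _ _
  prod_ne h hh := by
    rcases List.mem_cons.1 hh with rfl | hh
    · exact hg
    · exact G.prod_ne h (List.mem_of_mem_tail hh)
  refs i hi j hj := by
    rw [length_cons_tail] at hi ⊢
    rcases i with _ | t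
    · have := hrefs j (by simpa using hj)
      omega
    · simpa using G.lt_of_mem_getD (by simpa using hj)

variable {G g} {hg : g ≠ []} {hrefs : ∀ j, Sum.inr j ∈ g → 1 ≤ j ∧ j < G.prods.length}

theorem getD_withInitial_succ (k : ℕ) :
    (G.withInitial g hg hrefs).prods.getD (k + 1) [] = G.prods.getD (k + 1) [] := by
  simp [withInitial]

theorem withInitial_expansion :
    (G.withInitial g hg hrefs).expansion = g.flatMap G.symExpansion := by
  have hsim : ∀ j ∈ {j : ℕ | 1 ≤ j}, (G.withInitial g hg hrefs).prods.getD (id j) [] =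
      (G.prods.getD j []).map (Sum.map id id) ∧
      ∀ j', Sum.inr j' ∈ G.prods.getD j [] → j' ∈ {j : ℕ | 1 ≤ j} := by
    rintro (_ | t) ht
    · cases ht
    · refine ⟨by simpa using getD_withInitial_succ t, fun j' hj' => ?_⟩
      have := G.lt_of_mem_getD hj'
      show 1 ≤ j'
      omega
  rw [expansion_eq_symExpansion, symExpansion_inr]
  refine List.flatMap_congr fun x hx => ?_
  rcases x with a | j
  · rfl
  · exact symExpansion_map hsim (hrefs j hx).1

theorem withInitial_len : (G.withInitial g hg hrefs).len = g.length + G.vocabLen := by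
  simp [len, vocabLen, withInitial]

end WithInitial

section EraseProd

variable (G : AdmissibleGrammar V) {t : ℕ} (ht : 1 ≤ t) (ht' : t < G.prods.length)
  (hunref : ∀ b, Sum.inr t ∉ G.prods.getD b [])

def eraseProd : AdmissibleGrammar V where
  prods := (G.prods.eraseIdx t).map (List.map (Sum.map id (reindexErase t)))
  prods_ne := by
    rw [ne_eq, List.map_eq_nil_iff, ← List.length_eq_zero_iff, List.length_eraseIdx_of_lt ht']
    omega
  prod_ne h hh := by
    obtain ⟨h', hh', rfl⟩ := List.mem_map.1 hh
    simpa using G.prod_ne h' (List.mem_of_mem_eraseIdx hh')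
  refs i hi j' hj' := by
    rw [List.length_map, List.length_eraseIdx_of_lt ht'] at hi ⊢
    have hι : i = reindexErase t (if i < t then i else i + 1) := by
      unfold reindexErase; split_ifs <;> omega
    rw [hι, List.getD_map_map, List.getD_eraseIdx_reindexErase _ (by split_ifs <;> omega),
      List.inr_mem_map_sumMap] at hj'
    obtain ⟨j, hj, rfl⟩ := hj'
    have := G.lt_of_mem_getD hj
    have : j ≠ t := by rintro rfl; exact hunref _ hj
    unfold reindexErase at this ⊢
    split_ifs at * <;> omega

theorem getD_eraseProd {j : ℕ} (hj : j ≠ t) :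
    (G.eraseProd ht ht' hunref).prods.getD (reindexErase t j) [] =
      (G.prods.getD j []).map (Sum.map id (reindexErase t)) := by
  rw [eraseProd, List.getD_map_map, List.getD_eraseIdx_reindexErase _ hj]

theorem eraseProd_expansion : (G.eraseProd ht ht' hunref).expansion = G.expansion := by
  have h0 : reindexErase t 0 = 0 := by simp [reindexErase]
  have key := symExpansion_map (S := {j | j ≠ t}) (fun j hj =>
    ⟨G.getD_eraseProd ht ht' hunref hj, fun j' hj' h => hunref _ (h ▸ hj')⟩)
    (show 0 ≠ t by omega)
  rwa [h0] at key

theorem eraseProd_len :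
    (G.eraseProd ht ht' hunref).len + (G.prods.getD t []).length = G.len := by
  rw [len, len, eraseProd, List.map_map, ← List.CommMonoid.add_sum_eraseIdx
    (by simpa using ht' : t < (G.prods.map List.length).length), List.eraseIdx_map,
    List.getD_eq_getElem _ _ ht', List.getElem_map, add_comm]
  simp [Function.comp_def]

end EraseProd

section Append

variable (G H : AdmissibleGrammar V)

def append : AdmissibleGrammar V where
  prods := (G.prods.getD 0 [] ++ (H.prods.getD 0 []).map (Sum.map id (· + (G.prods.length - 1))))
    :: (G.prods.tail ++ H.prods.tail.map (List.map (Sum.map id (· + (G.prods.length - 1)))))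
  prods_ne := List.cons_ne_nil _ _
  prod_ne g hg := by
    simp only [List.mem_cons, List.mem_append, List.mem_map] at hg
    rcases hg with rfl | hg | ⟨g, hg, rfl⟩
    · exact fun h =>
        G.getD_ne_nil (List.length_pos_iff.2 G.prods_ne) (List.append_eq_nil_iff.1 h).1
    · exact G.prod_ne g (List.mem_of_mem_tail hg)
    · simpa using H.prod_ne g (List.mem_of_mem_tail hg)
  refs i hi j hj := by
    have hG := List.length_pos_iff.2 G.prods_ne
    have hH := List.length_pos_iff.2 H.prods_ne
    simp only [List.length_cons, List.length_append, List.length_tail, List.length_map] at hi ⊢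
    rcases i with _ | k
    · simp only [List.getD_cons_zero, List.mem_append, List.inr_mem_map_sumMap] at hj
      rcases hj with hj | ⟨j, hj, rfl⟩
      · have := G.lt_of_mem_getD hj; omega
      · have := H.lt_of_mem_getD hj; omega
    · rw [List.getD_cons_succ] at hj
      by_cases hk : k < G.prods.length - 1
      · rw [List.getD_append _ _ _ _ (by simpa using hk)] at hj
        have := G.lt_of_mem_getD (t := k + 1) (by simpa using hj)
        omega
      · rw [List.getD_append_right _ _ _ _ (by simpa using hk), List.getD_map_map,
          List.inr_mem_map_sumMap] at hj
        obtain ⟨j, hj, rfl⟩ := hj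
        have := H.lt_of_mem_getD (t := k - (G.prods.length - 1) + 1) (by simpa using hj)
        omega

theorem getD_append_prods_of_lt {j : ℕ} (hj : 1 ≤ j) (hj' : j < G.prods.length) :
    (G.append H).prods.getD j [] = G.prods.getD j [] := by
  obtain ⟨k, rfl⟩ : ∃ k, j = k + 1 := ⟨j - 1, by omega⟩
  rw [append, List.getD_cons_succ, List.getD_append _ _ _ _ (by simp; omega)]
  simp

theorem getD_append_prods_add {j : ℕ} (hj : 1 ≤ j) :
    (G.append H).prods.getD (j + (G.prods.length - 1)) [] =
      (H.prods.getD j []).map (Sum.map id (· + (G.prods.length - 1))) := by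
  obtain ⟨k, rfl⟩ : ∃ k, j = k + 1 := ⟨j - 1, by omega⟩
  rw [append, show k + 1 + (G.prods.length - 1) = (k + (G.prods.length - 1)) + 1 by omega,
    List.getD_cons_succ, List.getD_append_right _ _ _ _ (by simp), List.getD_map_map]
  simp

theorem append_expansion : (G.append H).expansion = G.expansion ++ H.expansion := by
  have hsimG : ∀ j ∈ {j | 1 ≤ j ∧ j < G.prods.length}, (G.append H).prods.getD (id j) [] =
      (G.prods.getD j []).map (Sum.map id id) ∧
      ∀ j', Sum.inr j' ∈ G.prods.getD j [] → j' ∈ {j | 1 ≤ j ∧ j < G.prods.length} := by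
    intro j ⟨hj, hj'⟩
    refine ⟨by simpa using G.getD_append_prods_of_lt H hj hj', fun j' hj' => ?_⟩
    have := G.lt_of_mem_getD hj'
    exact ⟨by omega, this.2⟩
  have hsimH : ∀ j ∈ {j | 1 ≤ j}, (G.append H).prods.getD (j + (G.prods.length - 1)) [] =
      (H.prods.getD j []).map (Sum.map id (· + (G.prods.length - 1))) ∧
      ∀ j', Sum.inr j' ∈ H.prods.getD j [] → j' ∈ {j | 1 ≤ j} :=
    fun j hj => ⟨G.getD_append_prods_add H hj, fun j' hj' => by
      have := H.lt_of_mem_getD hj'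
      show 1 ≤ j'
      omega⟩
  rw [expansion_eq_symExpansion, symExpansion_inr, expansion_eq_symExpansion, symExpansion_inr,
    expansion_eq_symExpansion, symExpansion_inr]
  show ((G.prods.getD 0 [] ++ _).flatMap _) = _
  rw [List.flatMap_append]
  congr 1
  · simpa using flatMap_symExpansion_map (σ := id) (g := G.prods.getD 0 [])
      fun j hj => symExpansion_map hsimG (G.lt_of_mem_getD hj)
  · exact flatMap_symExpansion_map fun j hj =>
      symExpansion_map hsimH (show 1 ≤ j by have := H.lt_of_mem_getD hj; omega)

theorem append_len : (G.append H).len = G.len + H.len := by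
  rw [len_eq, len_eq G, len_eq H]
  have hmap : ∀ f : V ⊕ ℕ → V ⊕ ℕ, List.length ∘ List.map f = List.length :=
    fun f => funext fun g => List.length_map f
  simp only [append, vocabLen, List.getD_cons_zero, List.length_append, List.length_map,
    List.drop_one, List.tail_cons, List.map_append, List.sum_append, List.map_map, hmap]
  omega

end Append

end AdmissibleGrammar

theorem Lm_le_len {V : Type*} (G : AdmissibleGrammar V) {v : List V} (h : G.IsFor v) :
    Lm v ≤ G.len :=
  Nat.sInf_le ⟨G, h, rfl⟩

theorem exists_isFor_len_eq_Lm {V : Type*} {v : List V} (hv : v ≠ []) :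
    ∃ G : AdmissibleGrammar V, G.IsFor v ∧ G.len = Lm v :=
  Nat.sInf_mem (s := {n | ∃ G : AdmissibleGrammar V, G.IsFor v ∧ G.len = n})
    ⟨_, AdmissibleGrammar.ofWord v hv, AdmissibleGrammar.ofWord_isFor v hv, rfl⟩

theorem Lm_append_le {V : Type*} {v u : List V} (hv : v ≠ []) (hu : u ≠ []) :
    Lm (v ++ u) ≤ Lm v + Lm u := by
  obtain ⟨G, hG, hGlen⟩ := exists_isFor_len_eq_Lm hv
  obtain ⟨H, hH, hHlen⟩ := exists_isFor_len_eq_Lm hu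
  calc Lm (v ++ u) ≤ (G.append H).len :=
      Lm_le_len _ (by rw [AdmissibleGrammar.IsFor, G.append_expansion, hG, hH])
    _ = Lm v + Lm u := by rw [G.append_len, hGlen, hHlen]

namespace AdmissibleGrammar

variable {V : Type*}

theorem Lm_le_of_flatMap_eq (G : AdmissibleGrammar V) {g : List (V ⊕ ℕ)} {w : List V}
    (hsub : ∀ j, Sum.inr j ∈ g → Sum.inr j ∈ G.prods.getD 0 [])
    (hw : g.flatMap G.symExpansion = w) (hne : w ≠ []) :
    Lm w ≤ g.length + G.vocabLen := by
  have hrefs (j : ℕ) (hj : Sum.inr j ∈ g) : 1 ≤ j ∧ j < G.prods.length := by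
    have := G.lt_of_mem_getD (hsub j hj)
    omega
  have hg : g ≠ [] := by rintro rfl; exact hne hw.symm
  rw [← withInitial_len (hg := hg) (hrefs := hrefs)]
  exact Lm_le_len _ (withInitial_expansion.trans hw)

def IsMinimal (G : AdmissibleGrammar V) : Prop :=
  ∀ H : AdmissibleGrammar V, H.expansion = G.expansion → G.len ≤ H.len

theorem IsFor.isMinimal {G : AdmissibleGrammar V} {v : List V} (hG : G.IsFor v)
    (hlen : G.len = Lm v) : G.IsMinimal := fun H hH =>
  hlen ▸ Lm_le_len H (hH.trans hG)

def Reaches (G : AdmissibleGrammar V) : ℕ → ℕ → Prop :=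
  Relation.ReflTransGen fun t s => Sum.inr s ∈ G.prods.getD t []

theorem IsMinimal.reaches {G : AdmissibleGrammar V} (hG : G.IsMinimal) {t : ℕ}
    (ht : t < G.prods.length) : G.Reaches 0 t := by
  classical
  by_contra hunr
  have hex : ∃ t, t < G.prods.length ∧ ¬ G.Reaches 0 t := ⟨t, ht, hunr⟩
  obtain ⟨ht', hunr'⟩ := Nat.find_spec hex
  have hpos : 1 ≤ Nat.find hex := Nat.one_le_iff_ne_zero.2 fun h =>
    hunr' (by rw [h]; exact Relation.ReflTransGen.refl)
  have hunref (b : ℕ) (hb : Sum.inr (Nat.find hex) ∈ G.prods.getD b []) : False := by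
    have hb' := G.lt_of_mem_getD hb
    have hreach : G.Reaches 0 b := by
      by_contra h
      exact Nat.find_min hex hb'.1 ⟨by omega, h⟩
    exact hunr' (hreach.tail hb)
  have hlen := G.eraseProd_len hpos ht' hunref
  have hle := hG _ (G.eraseProd_expansion hpos ht' hunref)
  have hpos' := List.length_pos_iff.2 (G.getD_ne_nil ht')
  omega

theorem Reaches.le {G : AdmissibleGrammar V} {s b : ℕ} (h : G.Reaches s b) : s ≤ b := by
  induction h with
  | refl => rfl
  | tail _ hc ih => exact ih.trans (G.lt_of_mem_getD hc).1.le

/-- Otherwise inlining the nonterminal would save one symbol. -/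
theorem IsMinimal.exists_ne_zero_inr_mem {G : AdmissibleGrammar V} (hG : G.IsMinimal)
    {la lb : List (V ⊕ ℕ)} {i : ℕ} (hp0 : G.prods.getD 0 [] = la ++ Sum.inr i :: lb)
    (hla : Sum.inr i ∉ la) (hlb : Sum.inr i ∉ lb) :
    ∃ b ≠ 0, Sum.inr i ∈ G.prods.getD b [] := by
  by_contra! hnone
  have hi := G.lt_of_mem_getD (t := 0) (j := i) (by rw [hp0]; simp)
  have hrefs (j : ℕ) (hj : Sum.inr j ∈ la ++ (G.prods.getD i [] ++ lb)) :
      1 ≤ j ∧ j < G.prods.length := by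
    have : 0 < j ∧ j < G.prods.length := by
      simp only [List.mem_append] at hj
      rcases hj with hj | hj | hj
      · exact G.lt_of_mem_getD (t := 0) (by rw [hp0]; simp [hj])
      · have := G.lt_of_mem_getD hj; omega
      · exact G.lt_of_mem_getD (t := 0) (by rw [hp0]; simp [hj])
    omega
  have hg : la ++ (G.prods.getD i [] ++ lb) ≠ [] := fun h =>
    G.getD_ne_nil hi.2 (List.append_eq_nil_iff.1 (List.append_eq_nil_iff.1 h).2).1
  set H := G.withInitial _ hg hrefs
  have hunref (b : ℕ) : Sum.inr i ∉ H.prods.getD b [] := by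
    rcases b with _ | k
    · have : Sum.inr i ∉ G.prods.getD i [] := fun h => (G.lt_of_mem_getD h).1.false
      simpa [H, withInitial, hla, hlb] using this
    · rw [getD_withInitial_succ]
      exact hnone _ k.succ_ne_zero
  have hiH : i < H.prods.length := lt_of_lt_of_eq hi.2 (length_cons_tail G _).symm
  have hexp : (H.eraseProd hi.1 hiH hunref).expansion = G.expansion := by
    rw [eraseProd_expansion, withInitial_expansion, expansion_eq_symExpansion,
      symExpansion_inr G 0, hp0]
    simp only [List.flatMap_append, List.flatMap_cons, symExpansion_inr G i]
  have hlen := H.eraseProd_len hi.1 hiH hunref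
  have := hG _ hexp
  rw [show H.prods.getD i [] = G.prods.getD i [] by
    obtain ⟨k, rfl⟩ : ∃ k, i = k + 1 := ⟨i - 1, by omega⟩
    exact getD_withInitial_succ k, withInitial_len] at hlen
  rw [len_eq G, hp0] at this
  simp only [List.length_append, List.length_cons] at hlen this
  omega

end AdmissibleGrammar

section Occurrences

variable {α : Type*} [DecidableEq α]

def numOcc (w l : List α) : ℕ :=
  (List.range l.length).countP fun p => w <+: l.drop p

theorem numOcc_add_numOcc_le_append (w a b : List α) :
    numOcc w a + numOcc w b ≤ numOcc w (a ++ b) := by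
  rw [numOcc, numOcc, numOcc, List.length_append, List.range_add, List.countP_append,
    List.countP_map]
  gcongr
  · refine List.countP_mono_left fun p hp h => ?_
    rw [List.mem_range] at hp
    simpa [List.drop_append_of_le_length hp.le] using (of_decide_eq_true h).trans
      (List.prefix_append _ _)
  · refine List.countP_mono_left fun p _ h => ?_
    simpa [List.drop_length_add_append] using h

theorem sum_numOcc_le_flatten (w : List α) (L : List (List α)) :
    (L.map (numOcc w)).sum ≤ numOcc w L.flatten := by
  induction L with
  | nil => simp
  | cons a L ih =>
    simp only [List.map_cons, List.sum_cons, List.flatten_cons]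
    exact (Nat.add_le_add_left ih _).trans (numOcc_add_numOcc_le_append w a _)

theorem one_le_numOcc_self {w : List α} (hw : w ≠ []) : 1 ≤ numOcc w w := by
  refine List.countP_pos_iff.2 ⟨0, ?_, by simp⟩
  simpa using List.length_pos_iff.2 hw

theorem exists_ne_of_two_le_numOcc {w l : List α} (h : 2 ≤ numOcc w l) :
    ∃ i j, i ≠ j ∧ w <+: l.drop i ∧ w <+: l.drop j := by
  rw [numOcc, List.countP_eq_length_filter] at h
  have hnd := (List.nodup_range (n := l.length)).filter (fun p => decide (w <+: l.drop p))
  match hf : (List.range l.length).filter (fun p => decide (w <+: l.drop p)), h, hnd with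
  | i :: j :: _, _, hnd =>
    have hi := List.of_mem_filter (hf ▸ List.mem_cons_self : i ∈ _)
    have hj := List.of_mem_filter (hf ▸ List.mem_cons_of_mem _ List.mem_cons_self : j ∈ _)
    exact ⟨i, j, fun hij => (List.nodup_cons.1 hnd).1 (hij ▸ List.mem_cons_self),
      by simpa using hi, by simpa using hj⟩

end Occurrences

theorem length_le_LgtOne {V : Type*} {w v : List V} {i j : ℕ} (hij : i ≠ j)
    (hi : w <+: v.drop i) (hj : w <+: v.drop j) : w.length ≤ LgtOne v := by
  refine le_csSup ⟨v.length, ?_⟩ ⟨w, rfl, i, j, hij, hi, hj⟩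
  rintro _ ⟨w', rfl, i', -, -, hi', -⟩
  exact hi'.length_le.trans (by simp)

namespace AdmissibleGrammar

variable {V : Type*}

section Occurrences

variable [DecidableEq V] (G : AdmissibleGrammar V)

theorem sum_numOcc_le_of_subperm (w : List V) {t : ℕ} {l : List (V ⊕ ℕ)}
    (hl : l.Subperm (G.prods.getD t [])) :
    (l.map fun x => numOcc w (G.symExpansion x)).sum ≤ numOcc w (G.symExpansion (.inr t)) := by
  obtain ⟨l', hperm, hsub⟩ := hl
  rw [← (hperm.map _).sum_eq, symExpansion_inr, List.flatMap_def]
  refine ((hsub.map _).sum_le_sum fun _ _ => Nat.zero_le _).trans ?_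
  simpa only [List.map_map, Function.comp_def] using
    sum_numOcc_le_flatten w ((G.prods.getD t []).map G.symExpansion)

theorem one_le_numOcc_of_reaches {i s b : ℕ} (hsb : G.Reaches s b)
    (hb : Sum.inr i ∈ G.prods.getD b []) :
    1 ≤ numOcc (G.symExpansion (.inr i)) (G.symExpansion (.inr s)) := by
  induction hsb using Relation.ReflTransGen.head_induction_on with
  | refl =>
    have hw := G.symExpansion_inr_ne_nil (G.lt_of_mem_getD hb).2
    simpa using (one_le_numOcc_self hw).trans
      (G.sum_numOcc_le_of_subperm _ (List.singleton_sublist.2 hb).subperm)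
  | head hsc _ ih =>
    simpa using ih.trans (G.sum_numOcc_le_of_subperm _ (List.singleton_sublist.2 hsc).subperm)

variable {G}

/-- Either the nonterminal is repeated in the initial production, or it also occurs in a
production reached through another symbol of the initial production. -/
theorem IsMinimal.two_le_numOcc (hG : G.IsMinimal) {i : ℕ}
    (hi : Sum.inr i ∈ G.prods.getD 0 []) :
    2 ≤ numOcc (G.symExpansion (.inr i)) G.expansion := by
  have hself := one_le_numOcc_self (G.symExpansion_inr_ne_nil (G.lt_of_mem_getD hi).2)
  by_cases hdup : (G.prods.getD 0 []).Duplicate (Sum.inr i)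
  · have hpair := G.sum_numOcc_le_of_subperm (G.symExpansion (.inr i))
      (List.duplicate_iff_sublist.1 hdup).subperm
    simp only [List.map_cons, List.map_nil, List.sum_cons, List.sum_nil] at hpair
    rw [expansion_eq_symExpansion]
    omega
  obtain ⟨la, lb, hp0⟩ := List.append_of_mem hi
  have hla : Sum.inr i ∉ la := fun h => hdup <| List.duplicate_iff_sublist.2 <| hp0 ▸
    (List.singleton_sublist.2 h).append (List.singleton_sublist.2 List.mem_cons_self)
  have hlb : Sum.inr i ∉ lb := fun h => hdup <| List.duplicate_iff_sublist.2 <| hp0 ▸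
    ((List.singleton_sublist.2 h).cons_cons _).trans (List.sublist_append_right la _)
  obtain ⟨b, hb0, hb⟩ := hG.exists_ne_zero_inr_mem hp0 hla hlb
  have hb' := G.lt_of_mem_getD hb
  obtain h0b | ⟨c, hc, hcb⟩ := (hG.reaches (hb'.1.trans hb'.2)).cases_head
  · exact absurd h0b.symm hb0
  have hci : i ≠ c := by
    rintro rfl
    exact absurd (Reaches.le hcb) (not_le.2 hb'.1)
  have hpair := G.sum_numOcc_le_of_subperm (G.symExpansion (.inr i))
    (List.cons_subperm_of_not_mem_of_mem (by simpa using hci) hi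
      (List.singleton_sublist.2 hc).subperm)
  have hc1 := G.one_le_numOcc_of_reaches hcb hb
  simp only [List.map_cons, List.map_nil, List.sum_cons, List.sum_nil] at hpair
  rw [expansion_eq_symExpansion]
  omega

end Occurrences

theorem IsMinimal.length_symExpansion_le {G : AdmissibleGrammar V} (hG : G.IsMinimal)
    {x : V ⊕ ℕ} (hx : x ∈ G.prods.getD 0 []) :
    (G.symExpansion x).length ≤ LgtOne G.expansion + 1 := by
  classical
  rcases x with a | i
  · simp [symExpansion_inl]
  · obtain ⟨p, q, hpq, hp, hq⟩ := exists_ne_of_two_le_numOcc (hG.two_le_numOcc hx)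
    exact (length_le_LgtOne hpq hp hq).trans (Nat.le_succ _)

end AdmissibleGrammar

theorem shortest_grammar_excess_le_vocab_general {V : Type*}
    (v u : List V) (hv : v ≠ []) (hu : u ≠ []) :
    (0 : ℤ) ≤ (Lm v : ℤ) + (Lm u : ℤ) - (Lm (v ++ u) : ℤ) ∧
      ∃ G : AdmissibleGrammar V, G.IsFor (v ++ u) ∧ G.len = Lm (v ++ u) ∧
        (Lm v : ℤ) + (Lm u : ℤ) - (Lm (v ++ u) : ℤ)
          ≤ (G.vocabLen : ℤ) + (LgtOne (v ++ u) : ℤ) := by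
  obtain ⟨G, hG, hGlen⟩ := exists_isFor_len_eq_Lm (List.append_ne_nil_of_left_ne_nil hv u)
  refine ⟨by have := Lm_append_le hv hu; omega, G, hG, hGlen, ?_⟩
  have hexp : (G.prods.getD 0 []).flatMap G.symExpansion = v ++ u := by
    rw [← G.symExpansion_inr, ← G.expansion_eq_symExpansion]
    exact hG
  obtain ⟨la, x, lb, w₁, w₂, hp0, hx, hva, hua⟩ := List.exists_of_flatMap_eq_append hu hexp
  have hLv := G.Lm_le_of_flatMap_eq (g := la ++ w₁.map Sum.inl) (by simp_all)
    (by simp [hva, AdmissibleGrammar.flatMap_symExpansion_map_inl]) hv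
  have hLu := G.Lm_le_of_flatMap_eq (g := w₂.map Sum.inl ++ lb) (by simp_all)
    (by simp [hua, AdmissibleGrammar.flatMap_symExpansion_map_inl]) hu
  have hB := (hG.isMinimal hGlen).length_symExpansion_le (x := x) (by rw [hp0]; simp)
  rw [hG, hx] at hB
  have hlen := G.len_eq
  rw [hp0] at hlen
  simp only [List.length_append, List.length_map, List.length_cons] at hLv hLu hB hlen
  omega

/-- For all nonempty strings `v` and `u`, one has
`0 ≤ L^m(v) + L^m(u) − L^m(vu)`, and there is a shortest admissible grammar
`G` for `vu` with
`L^m(v) + L^m(u) − L^m(vu) ≤ L_0(G) + L^{>1}(vu)`, where `L_0(G)` is the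
total length of the non-initial productions of `G`. -/
theorem shortest_grammar_excess_le_vocab {V : Type*} [Fintype V]
    (v u : List V) (hv : v ≠ []) (hu : u ≠ []) :
    (0 : ℤ) ≤ (Lm v : ℤ) + (Lm u : ℤ) - (Lm (v ++ u) : ℤ) ∧
      ∃ G : AdmissibleGrammar V, G.IsFor (v ++ u) ∧ G.len = Lm (v ++ u) ∧
        (Lm v : ℤ) + (Lm u : ℤ) - (Lm (v ++ u) : ℤ)
          ≤ (G.vocabLen : ℤ) + (LgtOne (v ++ u) : ℤ) :=
  shortest_grammar_excess_le_vocab_general v u hv hu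
end

section
/- Let f : {1,2,3,...} → ℝ be a function such that lim_{n→∞} f(n)/n = h for a real number h. Then for every n ≥ 1 the series Σ_{k=0}^{∞} [2f(2^k n) − f(2^{k+1} n)]/2^{k+1} converges and its sum equals f(n) − h·n. -/
/-! The `k`-th term is `u k / 2 ^ k - u (k + 1) / 2 ^ (k + 1)` with `u k = f (2 ^ k * n)`, so the
partial sums telescope to `f n - f (2 ^ m * n) / 2 ^ m`, and `f (2 ^ m * n) / 2 ^ m` is `n` times
`f (N) / N` along `N = 2 ^ m * n → ∞`, hence tends to `h * n`. -/

open Filter Topology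

lemma sum_range_two_mul_sub_div_two_pow (u : ℕ → ℝ) (m : ℕ) :
    ∑ k ∈ Finset.range m, (2 * u k - u (k + 1)) / 2 ^ (k + 1) = u 0 - u m / 2 ^ m := by
  have htele := Finset.sum_range_sub' (fun k => u k / 2 ^ k) m
  simp only [pow_zero, div_one] at htele
  rw [← htele]
  refine Finset.sum_congr rfl fun k _ => ?_
  field_simp
  ring

lemma tendsto_div_pow_of_tendsto_div {f : ℕ → ℝ} {h : ℝ}
    (hf : Tendsto (fun n : ℕ => f n / n) atTop (𝓝 h)) {b n : ℕ} (hb : 1 < b) (hn : 0 < n) :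
    Tendsto (fun m => f (b ^ m * n) / (b : ℝ) ^ m) atTop (𝓝 (h * n)) := by
  have hscale : Tendsto (fun m => b ^ m * n) atTop atTop :=
    (tendsto_pow_atTop_atTop_of_one_lt hb).atTop_mul_const' hn
  refine ((hf.comp hscale).mul_const (n : ℝ)).congr fun m => ?_
  have hn' : (n : ℝ) ≠ 0 := by positivity
  simp only [Function.comp_apply, Nat.cast_mul, Nat.cast_pow]
  field_simp

/-- If `f` is a function on the positive integers with `lim f(n)/n = h`, then
for every `n ≥ 1` the series `Σ_{k=0}^{∞} [2f(2^k n) − f(2^{k+1} n)]/2^{k+1}`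
converges and its sum equals `f(n) − h·n`. -/
theorem excess_series_sum (f : ℕ → ℝ) (h : ℝ)
    (hf : Filter.Tendsto (fun n : ℕ => f n / n) Filter.atTop (nhds h))
    (n : ℕ) (hn : 1 ≤ n) :
    Filter.Tendsto
      (fun m : ℕ => ∑ k ∈ Finset.range m,
        (2 * f (2 ^ k * n) - f (2 ^ (k + 1) * n)) / 2 ^ (k + 1))
      Filter.atTop (nhds (f n - h * n)) := by
  have hrest := tendsto_div_pow_of_tendsto_div hf one_lt_two hn
  simp only [sum_range_two_mul_sub_div_two_pow fun k => f (2 ^ k * n)]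
  simpa using tendsto_const_nhds.sub hrest
end

section
/- Let H : ℕ → ℝ satisfy H(0) = 0, H'(n) = H(n) − H(n−1) ≥ 0 for all n ≥ 1, and H''(k) = H(k) − 2H(k−1) + H(k−2) ≤ 0 for all k ≥ 2, and let h = lim_{n→∞} H'(n) (which exists since H' is nonincreasing and nonnegative). Then the limit E = lim_{n→∞} (2H(n) − H(2n)), which exists in [0,∞], satisfies E ≥ H(1) − h. -/
/-- Let `H : ℕ → ℝ` satisfy `H(0) = 0`, be nondecreasing
(`H(n) − H(n−1) ≥ 0` for `n ≥ 1`) and concave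
(`H(k) − 2H(k−1) + H(k−2) ≤ 0` for `k ≥ 2`), and let `h` be the limit of the
first differences.  Then the limit `E = lim (2H(n) − H(2n))` exists in
`[0,∞]` and satisfies `E ≥ H(1) − h`. -/
theorem excess_entropy_limit_ge (H : ℕ → ℝ) (h0 : H 0 = 0)
    (hmono : ∀ n : ℕ, 1 ≤ n → 0 ≤ H n - H (n - 1))
    (hconc : ∀ k : ℕ, 2 ≤ k → H k - 2 * H (k - 1) + H (k - 2) ≤ 0)
    (h : ℝ)
    (hh : Filter.Tendsto (fun n : ℕ => H (n + 1) - H n) Filter.atTop (nhds h)) :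
    ∃ E : EReal,
      Filter.Tendsto (fun n : ℕ => ((2 * H n - H (2 * n) : ℝ) : EReal))
        Filter.atTop (nhds E) ∧
      0 ≤ E ∧ ((H 1 - h : ℝ) : EReal) ≤ E := by
  set d : ℕ → ℝ := fun n => H (n + 1) - H n with hd
  have hd_step : ∀ n, d (n + 1) ≤ d n := by
    intro n
    have := hconc (n + 2) (by omega)
    simp only [Nat.add_sub_cancel] at this
    have h1 : n + 2 - 1 = n + 1 := by omega
    rw [h1] at this
    simp only [hd]
    linarith
  have hd_anti : Antitone d := antitone_nat_of_succ_le hd_step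
  set f : ℕ → ℝ := fun n => 2 * H n - H (2 * n) with hf
  have hf_step : ∀ n, f n ≤ f (n + 1) := by
    intro n
    have h1 : d (2 * n) ≤ d n := hd_anti (by omega)
    have h2 : d (2 * n + 1) ≤ d n := hd_anti (by omega)
    have e : 2 * (n + 1) = 2 * n + 1 + 1 := by ring
    simp only [hf, e]
    simp only [hd] at h1 h2
    linarith
  have hf_mono : Monotone f := monotone_nat_of_le_succ hf_step
  -- key inequality : d 0 - d n ≤ f n
  have hkey : ∀ n, d 0 - d n ≤ f n := by
    intro n
    induction n with
    | zero => simp [hf, h0]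
    | succ n ih =>
      have h1 : d (2 * n) ≤ d n := hd_anti (by omega)
      have h2 : d (2 * n + 1) ≤ d (n + 1) := hd_anti (by omega)
      have e : 2 * (n + 1) = 2 * n + 1 + 1 := by omega
      simp only [hf, hd, e] at h1 h2 ih ⊢
      linarith
  have hf0 : f 0 = 0 := by simp [hf, h0]
  -- h ≤ d n for all n
  have hhle : ∀ n, h ≤ d n := fun n =>
    le_of_tendsto hh (Filter.eventually_atTop.2 ⟨n, fun m hm => hd_anti hm⟩)
  by_cases hbdd : BddAbove (Set.range f)
  · refine ⟨((⨆ n, f n : ℝ) : EReal), ?_, ?_, ?_⟩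
    · exact EReal.tendsto_coe.2 (tendsto_atTop_ciSup hf_mono hbdd)
    · have : (0 : ℝ) ≤ ⨆ n, f n := hf0 ▸ le_ciSup hbdd 0
      exact_mod_cast this
    · have hlim : Filter.Tendsto (fun n => d 0 - d n) Filter.atTop
          (nhds (d 0 - h)) := tendsto_const_nhds.sub hh
      have : d 0 - h ≤ ⨆ n, f n :=
        le_of_tendsto hlim
          (Filter.Eventually.of_forall fun n => (hkey n).trans (le_ciSup hbdd n))
      have hd0 : d 0 = H 1 := by simp [hd, h0]
      rw [hd0] at this
      exact_mod_cast this
  · refine ⟨⊤, ?_, le_top, le_top⟩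
    have := Filter.tendsto_atTop_atTop_of_monotone' hf_mono hbdd
    rw [EReal.tendsto_nhds_top_iff_real]
    intro x
    filter_upwards [this.eventually_ge_atTop (x + 1)] with n hn
    exact_mod_cast lt_of_lt_of_le (by linarith) hn
end
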